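/- arXiv:2401.11774 — 2 statements merged into one kernel-verified Lean document; each statement's English description precedes it below -/
import Mathlib

section
/- Assume R ≻ 0. Then for every symmetric X̃ ∈ ℝ^{n×n} with X̃ ⪰ 0, one has L R⁻¹ Lᵀ + Π₁₁(X̃) − L_c(X̃) R_c(X̃)⁻¹ L_c(X̃)ᵀ ⪰ 0. -/
open Matrix Filter

noncomputable section

/-- `Π₁₁(X) = Σᵢ (A₀ⁱ)ᵀ X A₀ⁱ`. -/
def Pi11 {n r : ℕ} (A0 : Fin r → Matrix (Fin n) (Fin n) ℝ)
    (X : Matrix (Fin n) (Fin n) ℝ) : Matrix (Fin n) (Fin n) ℝ :=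
  ∑ i, (A0 i)ᵀ * X * A0 i

/-- `Π₁₂(X) = Σᵢ (A₀ⁱ)ᵀ X B₀ⁱ`. -/
def Pi12 {n m r : ℕ} (A0 : Fin r → Matrix (Fin n) (Fin n) ℝ)
    (B0 : Fin r → Matrix (Fin n) (Fin m) ℝ)
    (X : Matrix (Fin n) (Fin n) ℝ) : Matrix (Fin n) (Fin m) ℝ :=
  ∑ i, (A0 i)ᵀ * X * B0 i

/-- `Π₂₂(X) = Σᵢ (B₀ⁱ)ᵀ X B₀ⁱ`. -/
def Pi22 {n m r : ℕ} (B0 : Fin r → Matrix (Fin n) (Fin m) ℝ)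
    (X : Matrix (Fin n) (Fin n) ℝ) : Matrix (Fin m) (Fin m) ℝ :=
  ∑ i, (B0 i)ᵀ * X * B0 i

/-- The block matrix `Π(X) = [Π₁₁(X), Π₁₂(X); Π₁₂(X)ᵀ, Π₂₂(X)]`. -/
def PiBlock {n m r : ℕ} (A0 : Fin r → Matrix (Fin n) (Fin n) ℝ)
    (B0 : Fin r → Matrix (Fin n) (Fin m) ℝ)
    (X : Matrix (Fin n) (Fin n) ℝ) : Matrix (Fin n ⊕ Fin m) (Fin n ⊕ Fin m) ℝ :=
  fromBlocks (Pi11 A0 X) (Pi12 A0 B0 X) (Pi12 A0 B0 X)ᵀ (Pi22 B0 X)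

/-- `L_c(X) = L + Π₁₂(X)`. -/
def Lc {n m r : ℕ} (L : Matrix (Fin n) (Fin m) ℝ)
    (A0 : Fin r → Matrix (Fin n) (Fin n) ℝ) (B0 : Fin r → Matrix (Fin n) (Fin m) ℝ)
    (X : Matrix (Fin n) (Fin n) ℝ) : Matrix (Fin n) (Fin m) ℝ :=
  L + Pi12 A0 B0 X

/-- `R_c(X) = R + Π₂₂(X)`. -/
def Rc {n m r : ℕ} (R : Matrix (Fin m) (Fin m) ℝ)
    (B0 : Fin r → Matrix (Fin n) (Fin m) ℝ)
    (X : Matrix (Fin n) (Fin n) ℝ) : Matrix (Fin m) (Fin m) ℝ :=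
  R + Pi22 B0 X

/-- `Q_c(X) = Q + Π₁₁(X)`. -/
def Qc {n r : ℕ} (Q : Matrix (Fin n) (Fin n) ℝ)
    (A0 : Fin r → Matrix (Fin n) (Fin n) ℝ)
    (X : Matrix (Fin n) (Fin n) ℝ) : Matrix (Fin n) (Fin n) ℝ :=
  Q + Pi11 A0 X

/-- `A_c(X) = A − B R_c(X)⁻¹ L_c(X)ᵀ`. -/
def Ac {n m r : ℕ} (A : Matrix (Fin n) (Fin n) ℝ) (B : Matrix (Fin n) (Fin m) ℝ)
    (L : Matrix (Fin n) (Fin m) ℝ) (R : Matrix (Fin m) (Fin m) ℝ)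
    (A0 : Fin r → Matrix (Fin n) (Fin n) ℝ) (B0 : Fin r → Matrix (Fin n) (Fin m) ℝ)
    (X : Matrix (Fin n) (Fin n) ℝ) : Matrix (Fin n) (Fin n) ℝ :=
  A - B * (Rc R B0 X)⁻¹ * (Lc L A0 B0 X)ᵀ

/-- `G_c(X) = B R_c(X)⁻¹ Bᵀ`. -/
def Gc {n m r : ℕ} (B : Matrix (Fin n) (Fin m) ℝ) (R : Matrix (Fin m) (Fin m) ℝ)
    (B0 : Fin r → Matrix (Fin n) (Fin m) ℝ)
    (X : Matrix (Fin n) (Fin n) ℝ) : Matrix (Fin n) (Fin n) ℝ :=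
  B * (Rc R B0 X)⁻¹ * Bᵀ

/-- `H_c(X) = Q_c(X) − L_c(X) R_c(X)⁻¹ L_c(X)ᵀ`. -/
def Hc {n m r : ℕ} (Q : Matrix (Fin n) (Fin n) ℝ) (L : Matrix (Fin n) (Fin m) ℝ)
    (R : Matrix (Fin m) (Fin m) ℝ)
    (A0 : Fin r → Matrix (Fin n) (Fin n) ℝ) (B0 : Fin r → Matrix (Fin n) (Fin m) ℝ)
    (X : Matrix (Fin n) (Fin n) ℝ) : Matrix (Fin n) (Fin n) ℝ :=
  Qc Q A0 X - Lc L A0 B0 X * (Rc R B0 X)⁻¹ * (Lc L A0 B0 X)ᵀ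

/-- The SCARE residual
`𝓡(X) = AᵀX + XA + Q_c(X) − (XB + L_c(X)) R_c(X)⁻¹ (XB + L_c(X))ᵀ`. -/
def scareRes {n m r : ℕ} (A : Matrix (Fin n) (Fin n) ℝ) (B : Matrix (Fin n) (Fin m) ℝ)
    (Q : Matrix (Fin n) (Fin n) ℝ) (L : Matrix (Fin n) (Fin m) ℝ)
    (R : Matrix (Fin m) (Fin m) ℝ)
    (A0 : Fin r → Matrix (Fin n) (Fin n) ℝ) (B0 : Fin r → Matrix (Fin n) (Fin m) ℝ)
    (X : Matrix (Fin n) (Fin n) ℝ) : Matrix (Fin n) (Fin n) ℝ :=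
  Aᵀ * X + X * A + Qc Q A0 X -
    (X * B + Lc L A0 B0 X) * (Rc R B0 X)⁻¹ * (X * B + Lc L A0 B0 X)ᵀ

/-- `Ω(X) = [−G_c(X), −A_c(X); −A_c(X)ᵀ, H_c(X)]`. -/
def Omega {n m r : ℕ} (A : Matrix (Fin n) (Fin n) ℝ) (B : Matrix (Fin n) (Fin m) ℝ)
    (Q : Matrix (Fin n) (Fin n) ℝ) (L : Matrix (Fin n) (Fin m) ℝ)
    (R : Matrix (Fin m) (Fin m) ℝ)
    (A0 : Fin r → Matrix (Fin n) (Fin n) ℝ) (B0 : Fin r → Matrix (Fin n) (Fin m) ℝ)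
    (X : Matrix (Fin n) (Fin n) ℝ) : Matrix (Fin n ⊕ Fin n) (Fin n ⊕ Fin n) ℝ :=
  fromBlocks (-(Gc B R B0 X)) (-(Ac A B L R A0 B0 X)) (-(Ac A B L R A0 B0 X))ᵀ
    (Hc Q L R A0 B0 X)

/-- The `2n×n` matrix `[X; −Iₙ]` stacking `X` over `−Iₙ`. -/
def stackNegI {n : ℕ} (X : Matrix (Fin n) (Fin n) ℝ) :
    Matrix (Fin n ⊕ Fin n) (Fin n) ℝ :=
  fromRows X (-1)

/-- The pair `(A, B)` is stabilizable: `yᴴ(A − λI) = 0`, `yᴴB = 0`, `Re λ ≥ 0` imply `y = 0`. -/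
def Stabilizable {n m : ℕ} (A : Matrix (Fin n) (Fin n) ℝ)
    (B : Matrix (Fin n) (Fin m) ℝ) : Prop :=
  ∀ (lam : ℂ) (y : Fin n → ℂ), 0 ≤ lam.re →
    vecMul (star y) (A.map Complex.ofReal - lam • 1) = 0 →
    vecMul (star y) (B.map Complex.ofReal) = 0 → y = 0

/-- The pair `(C, A)` is detectable: `(A − λI)z = 0`, `Cz = 0`, `Re λ ≥ 0` imply `z = 0`. -/
def Detectable {p n : ℕ} (C : Matrix (Fin p) (Fin n) ℝ)
    (A : Matrix (Fin n) (Fin n) ℝ) : Prop :=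
  ∀ (lam : ℂ) (z : Fin n → ℂ), 0 ≤ lam.re →
    mulVec (A.map Complex.ofReal - lam • 1) z = 0 →
    mulVec (C.map Complex.ofReal) z = 0 → z = 0

/-- A real square matrix is stable if all its (complex) eigenvalues have negative real part. -/
def IsStableMatrix {n : ℕ} (M : Matrix (Fin n) (Fin n) ℝ) : Prop :=
  ∀ μ ∈ spectrum ℂ (M.map Complex.ofReal), μ.re < 0

/-- Kernel condition: `(Q − LR⁻¹Lᵀ)z = 0` implies `Lᵀz = 0` and `A₀ⁱ z = 0` for all `i`. -/
def KernelCondition {n m r : ℕ} (Q : Matrix (Fin n) (Fin n) ℝ)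
    (L : Matrix (Fin n) (Fin m) ℝ) (R : Matrix (Fin m) (Fin m) ℝ)
    (A0 : Fin r → Matrix (Fin n) (Fin n) ℝ) : Prop :=
  ∀ z : Fin n → ℂ,
    mulVec ((Q - L * R⁻¹ * Lᵀ).map Complex.ofReal) z = 0 →
    mulVec (Lᵀ.map Complex.ofReal) z = 0 ∧
      ∀ i, mulVec ((A0 i).map Complex.ofReal) z = 0

/-- `Γ(X) = [[0, −A, −B], [−Aᵀ, Q_c(X), L_c(X)], [−Bᵀ, L_c(X)ᵀ, R_c(X)]]`. -/
def Gamma {n m r : ℕ} (A : Matrix (Fin n) (Fin n) ℝ) (B : Matrix (Fin n) (Fin m) ℝ)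
    (Q : Matrix (Fin n) (Fin n) ℝ) (L : Matrix (Fin n) (Fin m) ℝ)
    (R : Matrix (Fin m) (Fin m) ℝ)
    (A0 : Fin r → Matrix (Fin n) (Fin n) ℝ) (B0 : Fin r → Matrix (Fin n) (Fin m) ℝ)
    (X : Matrix (Fin n) (Fin n) ℝ) :
    Matrix ((Fin n ⊕ Fin n) ⊕ Fin m) ((Fin n ⊕ Fin n) ⊕ Fin m) ℝ :=
  fromBlocks (fromBlocks 0 (-A) (-Aᵀ) (Qc Q A0 X))
    (fromRows (-B) (Lc L A0 B0 X))
    (fromRows (-B) (Lc L A0 B0 X))ᵀ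
    (Rc R B0 X)

/-- `F_W(Y) = [Y; −Iₙ]ᵀ (Ω(Y) − Ω(W)) [Y; −Iₙ]`. -/
def FW {n m r : ℕ} (A : Matrix (Fin n) (Fin n) ℝ) (B : Matrix (Fin n) (Fin m) ℝ)
    (Q : Matrix (Fin n) (Fin n) ℝ) (L : Matrix (Fin n) (Fin m) ℝ)
    (R : Matrix (Fin m) (Fin m) ℝ)
    (A0 : Fin r → Matrix (Fin n) (Fin n) ℝ) (B0 : Fin r → Matrix (Fin n) (Fin m) ℝ)
    (W Y : Matrix (Fin n) (Fin n) ℝ) : Matrix (Fin n) (Fin n) ℝ :=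
  (stackNegI Y)ᵀ * (Omega A B Q L R A0 B0 Y - Omega A B Q L R A0 B0 W) * stackNegI Y

/-- `𝓕_W(Z) = Kᵀ Π(Z) K` with `K = [−Iₙ; R_c(W)⁻¹ (L_c(W) + W B)ᵀ]`. -/
def Fcal {n m r : ℕ} (B : Matrix (Fin n) (Fin m) ℝ)
    (L : Matrix (Fin n) (Fin m) ℝ) (R : Matrix (Fin m) (Fin m) ℝ)
    (A0 : Fin r → Matrix (Fin n) (Fin n) ℝ) (B0 : Fin r → Matrix (Fin n) (Fin m) ℝ)
    (W Z : Matrix (Fin n) (Fin n) ℝ) : Matrix (Fin n) (Fin n) ℝ :=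
  (fromRows (-1 : Matrix (Fin n) (Fin n) ℝ)
      ((Rc R B0 W)⁻¹ * (Lc L A0 B0 W + W * B)ᵀ))ᵀ *
    PiBlock A0 B0 Z *
    fromRows (-1 : Matrix (Fin n) (Fin n) ℝ)
      ((Rc R B0 W)⁻¹ * (Lc L A0 B0 W + W * B)ᵀ)
/-! The block matrix `[L R⁻¹ Lᵀ + Π₁₁(X̃), L_c(X̃); L_c(X̃)ᵀ, R_c(X̃)]` is the sum of
`[L R⁻¹ Lᵀ, L; Lᵀ, R]`, whose Schur complement with respect to `R ≻ 0` vanishes, and of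
`Π(X̃) = Σᵢ [A₀ⁱ B₀ⁱ]ᵀ X̃ [A₀ⁱ B₀ⁱ] ⪰ 0`. Hence it is positive semidefinite, and so is its Schur
complement with respect to `R_c(X̃) ⪰ R ≻ 0`, which is the matrix in question. -/

namespace Matrix

theorem posSemidef_fromBlocks_mul_inv_mul_conjTranspose {m n 𝕜 : Type*} [Fintype m] [Fintype n]
    [DecidableEq n] [Field 𝕜] [PartialOrder 𝕜] [StarRing 𝕜] [StarOrderedRing 𝕜]
    {R : Matrix n n 𝕜} (hR : R.PosDef) (L : Matrix m n 𝕜) :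
    (fromBlocks (L * R⁻¹ * Lᴴ) L Lᴴ R).PosSemidef := by
  have := hR.isUnit.invertible
  exact (PosDef.fromBlocks₂₂ _ L hR).mpr (by simpa using PosSemidef.zero)

end Matrix

section PiBlock

variable {n m r : ℕ} (A0 : Fin r → Matrix (Fin n) (Fin n) ℝ)
  (B0 : Fin r → Matrix (Fin n) (Fin m) ℝ) {X : Matrix (Fin n) (Fin n) ℝ}

theorem PiBlock_eq_sum_transpose_fromCols_mul_mul (hX : X.IsHermitian) :
    PiBlock A0 B0 X = ∑ i, (fromCols (A0 i) (B0 i))ᵀ * X * fromCols (A0 i) (B0 i) := by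
  have hXt : Xᵀ = X := by simpa only [conjTranspose_eq_transpose_of_trivial] using hX.eq
  simp only [PiBlock, Pi11, Pi12, Pi22, transpose_sum, transpose_fromCols, fromRows_mul,
    mul_fromCols, transpose_mul, transpose_transpose, hXt, Matrix.mul_assoc]
  ext (i | i) (j | j) <;>
    simp only [Matrix.sum_apply, fromBlocks_apply₁₁, fromBlocks_apply₁₂, fromBlocks_apply₂₁,
      fromBlocks_apply₂₂, fromRows_apply_inl, fromRows_apply_inr, fromCols_apply_inl,
      fromCols_apply_inr]

theorem posSemidef_PiBlock (hX : X.PosSemidef) : (PiBlock A0 B0 X).PosSemidef := by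
  rw [PiBlock_eq_sum_transpose_fromCols_mul_mul A0 B0 hX.isHermitian]
  refine posSemidef_sum _ fun i _ => ?_
  simpa only [conjTranspose_eq_transpose_of_trivial] using hX.conjTranspose_mul_mul_same _

theorem posDef_Rc {R : Matrix (Fin m) (Fin m) ℝ} (hR : R.PosDef) (hX : X.PosSemidef) :
    (Rc R B0 X).PosDef :=
  -- `Π₂₂(X)` is the lower right block of `Π(X)`, whatever `A₀` is
  hR.add_posSemidef ((posSemidef_PiBlock 0 B0 hX).submatrix Sum.inr)

end PiBlock

theorem stmt2_general (n m r : ℕ)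
    (L : Matrix (Fin n) (Fin m) ℝ)
    (R : Matrix (Fin m) (Fin m) ℝ)
    (A0 : Fin r → Matrix (Fin n) (Fin n) ℝ) (B0 : Fin r → Matrix (Fin n) (Fin m) ℝ)
    (hRpd : R.PosDef) :
    ∀ Xt : Matrix (Fin n) (Fin n) ℝ, Xt.IsHermitian → Xt.PosSemidef →
      (L * R⁻¹ * Lᵀ + Pi11 A0 Xt -
        Lc L A0 B0 Xt * (Rc R B0 Xt)⁻¹ * (Lc L A0 B0 Xt)ᵀ).PosSemidef := by
  intro Xt _ hXt
  have hRc := posDef_Rc B0 hRpd hXt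
  have := hRc.isUnit.invertible
  have hblock : (fromBlocks (L * R⁻¹ * Lᵀ + Pi11 A0 Xt) (Lc L A0 B0 Xt) (Lc L A0 B0 Xt)ᴴ
      (Rc R B0 Xt)).PosSemidef := by
    have := (posSemidef_fromBlocks_mul_inv_mul_conjTranspose hRpd L).add
      (posSemidef_PiBlock A0 B0 hXt)
    rwa [PiBlock, fromBlocks_add, conjTranspose_eq_transpose_of_trivial, ← transpose_add] at this
  simpa only [conjTranspose_eq_transpose_of_trivial] using (PosDef.fromBlocks₂₂ _ _ hRc).mp hblock

/-- If R ≻ 0 then for every symmetric PSD X̃ one has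
LR⁻¹Lᵀ + Π₁₁(X̃) − L_c(X̃) R_c(X̃)⁻¹ L_c(X̃)ᵀ ⪰ 0. -/
theorem stmt2 (n m r : ℕ) (hn : 0 < n) (hm : 0 < m) (hr : 0 < r)
    (A Q : Matrix (Fin n) (Fin n) ℝ) (B L : Matrix (Fin n) (Fin m) ℝ)
    (R : Matrix (Fin m) (Fin m) ℝ)
    (A0 : Fin r → Matrix (Fin n) (Fin n) ℝ) (B0 : Fin r → Matrix (Fin n) (Fin m) ℝ)
    (hQ : Q.IsHermitian) (hRsymm : R.IsHermitian)
    (hRpd : R.PosDef) :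
    ∀ Xt : Matrix (Fin n) (Fin n) ℝ, Xt.IsHermitian → Xt.PosSemidef →
      (L * R⁻¹ * Lᵀ + Pi11 A0 Xt -
        Lc L A0 B0 Xt * (Rc R B0 Xt)⁻¹ * (Lc L A0 B0 Xt)ᵀ).PosSemidef :=
  stmt2_general n m r L R A0 B0 hRpd
end
end

section
/- Assume R ≻ 0. For symmetric matrices X, Y ∈ ℝ^{n×n} with X ⪰ Y ⪰ 0, one has Ω(X) ⪰ Ω(Y). -/
open Matrix Filter

noncomputable section

/-!
`Ω(X)` is the Schur complement of the block `R_c(X) ≻ 0` in `Γ(X)`, and `Γ` is affine in `X`,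
with `Γ(X) − Γ(Y) = Σᵢ Kᵢᵀ (X − Y) Kᵢ ⪰ 0` for `Kᵢ = [0, A₀ⁱ, B₀ⁱ]`. Schur complements are
monotone: for `M = [P, F; Fᴴ, D]` with `D ≻ 0`, `xᴴ (P − F D⁻¹ Fᴴ) x` is the minimum over `y` of
the quadratic form of `M` at `(x, y)`, so `M₁ ⪰ M₂` forces the same inequality between the Schur
complements.
-/

open scoped ComplexOrder in
theorem Matrix.PosSemidef.schur_complement₂₂_sub {𝕜 m n : Type*} [RCLike 𝕜]
    [Fintype m] [Fintype n] [DecidableEq n]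
    {A₁ A₂ : Matrix m m 𝕜} {B₁ B₂ : Matrix m n 𝕜} {D₁ D₂ : Matrix n n 𝕜}
    (h : (fromBlocks A₁ B₁ B₁ᴴ D₁ - fromBlocks A₂ B₂ B₂ᴴ D₂).PosSemidef)
    (hD₁ : D₁.PosDef) (hD₂ : D₂.PosDef) :
    ((A₁ - B₁ * D₁⁻¹ * B₁ᴴ) - (A₂ - B₂ * D₂⁻¹ * B₂ᴴ)).PosSemidef := by
  have := hD₁.isUnit.invertible
  have := hD₂.isUnit.invertible
  have hA : (A₁ - A₂).IsHermitian := by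
    convert h.isHermitian.submatrix Sum.inl using 1
    ext i j
    simp
  have hS : ((A₁ - B₁ * D₁⁻¹ * B₁ᴴ) - (A₂ - B₂ * D₂⁻¹ * B₂ᴴ)).IsHermitian := by
    convert (hA.sub (isHermitian_mul_mul_conjTranspose B₁ hD₁.isHermitian.inv)).add
      (isHermitian_mul_mul_conjTranspose B₂ hD₂.isHermitian.inv) using 1
    abel
  refine .of_dotProduct_mulVec_nonneg hS fun x => ?_
  set y := -((D₁⁻¹ * B₁ᴴ) *ᵥ x)
  have h₁ := schur_complement_eq₂₂ A₁ B₁ x y hD₁.isHermitian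
  have h₂ := schur_complement_eq₂₂ A₂ B₂ x y hD₂.isHermitian
  simp only [y, add_neg_cancel, star_zero, zero_vecMul, zero_dotProduct, zero_add] at h₁
  have hM := h.dotProduct_mulVec_nonneg (x ⊕ᵥ y)
  rw [sub_mulVec, dotProduct_sub, sub_nonneg, dotProduct_mulVec, dotProduct_mulVec, h₁, h₂] at hM
  have hD := hD₂.posSemidef.dotProduct_mulVec_nonneg ((D₂⁻¹ * B₂ᴴ) *ᵥ x + y)
  rw [dotProduct_mulVec] at hD
  rw [sub_mulVec, dotProduct_sub, sub_nonneg, dotProduct_mulVec, dotProduct_mulVec]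
  exact le_trans (le_add_of_nonneg_left hD) hM

theorem Matrix.PosSemidef.transpose_mul_mul_same {m n : Type*} [Fintype m] [Fintype n]
    {A : Matrix m m ℝ} (hA : A.PosSemidef) (B : Matrix m n ℝ) : (Bᵀ * A * B).PosSemidef := by
  simpa [conjTranspose_eq_transpose_of_trivial] using hA.conjTranspose_mul_mul_same B

theorem Pi22_posSemidef {n m r : ℕ} (B0 : Fin r → Matrix (Fin n) (Fin m) ℝ)
    {X : Matrix (Fin n) (Fin n) ℝ} (hX : X.PosSemidef) : (Pi22 B0 X).PosSemidef :=
  posSemidef_sum _ fun i _ => hX.transpose_mul_mul_same (B0 i)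

theorem Rc_posDef {n m r : ℕ} {R : Matrix (Fin m) (Fin m) ℝ} (hR : R.PosDef)
    (B0 : Fin r → Matrix (Fin n) (Fin m) ℝ) {X : Matrix (Fin n) (Fin n) ℝ}
    (hX : X.PosSemidef) : (Rc R B0 X).PosDef :=
  hR.add_posSemidef (Pi22_posSemidef B0 hX)

theorem transpose_Pi12 {n m r : ℕ} (A0 : Fin r → Matrix (Fin n) (Fin n) ℝ)
    (B0 : Fin r → Matrix (Fin n) (Fin m) ℝ) {X : Matrix (Fin n) (Fin n) ℝ} (hX : X.IsHermitian) :
    (Pi12 A0 B0 X)ᵀ = ∑ i, (B0 i)ᵀ * X * A0 i := by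
  have hXt : Xᵀ = X := by rw [← conjTranspose_eq_transpose_of_trivial, hX.eq]
  simp only [Pi12, transpose_sum, transpose_mul, hXt, transpose_transpose, Matrix.mul_assoc]

section

variable {n m r : ℕ} (A Q : Matrix (Fin n) (Fin n) ℝ) (B L : Matrix (Fin n) (Fin m) ℝ)
  (R : Matrix (Fin m) (Fin m) ℝ)
  (A0 : Fin r → Matrix (Fin n) (Fin n) ℝ) (B0 : Fin r → Matrix (Fin n) (Fin m) ℝ)

theorem Gamma_eq_Gamma_zero_add_sum {X : Matrix (Fin n) (Fin n) ℝ} (hX : X.IsHermitian) :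
    Gamma A B Q L R A0 B0 X = Gamma A B Q L R A0 B0 0 +
      ∑ i, (fromCols (fromCols 0 (A0 i)) (B0 i))ᵀ * X * fromCols (fromCols 0 (A0 i)) (B0 i) := by
  simp only [Gamma, Lc, transpose_fromRows, transpose_add, transpose_Pi12 A0 B0 hX]
  ext ((a | a) | a) ((b | b) | b) <;>
    simp [Qc, Rc, Pi11, Pi12, Pi22, Matrix.sum_apply, transpose_fromCols, fromRows_mul,
      Matrix.mul_assoc]

theorem Gamma_sub_Gamma_posSemidef {X Y : Matrix (Fin n) (Fin n) ℝ} (hX : X.IsHermitian)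
    (hY : Y.IsHermitian) (hXY : (X - Y).PosSemidef) :
    (Gamma A B Q L R A0 B0 X - Gamma A B Q L R A0 B0 Y).PosSemidef := by
  rw [Gamma_eq_Gamma_zero_add_sum A Q B L R A0 B0 hX,
    Gamma_eq_Gamma_zero_add_sum A Q B L R A0 B0 hY, add_sub_add_left_eq_sub,
    ← Finset.sum_sub_distrib]
  refine posSemidef_sum _ fun i _ => ?_
  rw [← Matrix.sub_mul, ← Matrix.mul_sub]
  exact hXY.transpose_mul_mul_same _

theorem Omega_eq_sub_mul_inv_mul {X : Matrix (Fin n) (Fin n) ℝ} (hR : (Rc R B0 X).IsHermitian) :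
    Omega A B Q L R A0 B0 X = fromBlocks 0 (-A) (-Aᵀ) (Qc Q A0 X) -
      fromRows (-B) (Lc L A0 B0 X) * (Rc R B0 X)⁻¹ * (fromRows (-B) (Lc L A0 B0 X))ᴴ := by
  have hRinv : (Rc R B0 X)⁻¹ᵀ = (Rc R B0 X)⁻¹ := by
    rw [transpose_nonsing_inv, ← conjTranspose_eq_transpose_of_trivial, hR.eq]
  rw [conjTranspose_eq_transpose_of_trivial, transpose_fromRows, fromRows_mul,
    fromRows_mul_fromCols, sub_eq_add_neg, fromBlocks_neg, fromBlocks_add, Omega, Gc, Ac, Hc]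
  congr 1 <;> simp [transpose_mul, hRinv, Matrix.mul_assoc, sub_eq_add_neg, add_comm]

end

theorem stmt6_general (n m r : ℕ)
    (A Q : Matrix (Fin n) (Fin n) ℝ) (B L : Matrix (Fin n) (Fin m) ℝ)
    (R : Matrix (Fin m) (Fin m) ℝ)
    (A0 : Fin r → Matrix (Fin n) (Fin n) ℝ) (B0 : Fin r → Matrix (Fin n) (Fin m) ℝ)
    (hRpd : R.PosDef)
    (X Y : Matrix (Fin n) (Fin n) ℝ)
    (hX : X.IsHermitian) (hY : Y.IsHermitian)
    (hYpsd : Y.PosSemidef) (hXY : (X - Y).PosSemidef) :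
    (Omega A B Q L R A0 B0 X - Omega A B Q L R A0 B0 Y).PosSemidef := by
  have hXpsd : X.PosSemidef := by simpa using hXY.add hYpsd
  have hRX := Rc_posDef hRpd B0 hXpsd
  have hRY := Rc_posDef hRpd B0 hYpsd
  rw [Omega_eq_sub_mul_inv_mul A Q B L R A0 B0 hRX.isHermitian,
    Omega_eq_sub_mul_inv_mul A Q B L R A0 B0 hRY.isHermitian]
  refine Matrix.PosSemidef.schur_complement₂₂_sub ?_ hRX hRY
  simpa only [Gamma, conjTranspose_eq_transpose_of_trivial] using
    Gamma_sub_Gamma_posSemidef A Q B L R A0 B0 hX hY hXY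

/-- If R ≻ 0 then Ω is matrix-monotone on the PSD order: X ⪰ Y ⪰ 0 implies Ω(X) ⪰ Ω(Y). -/
theorem stmt6 (n m r : ℕ) (hn : 0 < n) (hm : 0 < m) (hr : 0 < r)
    (A Q : Matrix (Fin n) (Fin n) ℝ) (B L : Matrix (Fin n) (Fin m) ℝ)
    (R : Matrix (Fin m) (Fin m) ℝ)
    (A0 : Fin r → Matrix (Fin n) (Fin n) ℝ) (B0 : Fin r → Matrix (Fin n) (Fin m) ℝ)
    (hQ : Q.IsHermitian) (hRsymm : R.IsHermitian)
    (hRpd : R.PosDef)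
    (X Y : Matrix (Fin n) (Fin n) ℝ)
    (hX : X.IsHermitian) (hY : Y.IsHermitian)
    (hYpsd : Y.PosSemidef) (hXY : (X - Y).PosSemidef) :
    (Omega A B Q L R A0 B0 X - Omega A B Q L R A0 B0 Y).PosSemidef :=
  stmt6_general n m r A Q B L R A0 B0 hRpd X Y hX hY hYpsd hXY
end
end
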